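/- Let η : X → Δ_m be the true class-probability function for distribution D and η̂ : X → Δ_m an estimate. Let β ∈ R_+^m with ‖β‖_2 ≤ 1 define the linear metric E[h] = Σ_i β_i E_x[η_i(x) h_i(x)], and let Ŵ_i(x) be weights satisfying |Ŵ_i(x) − β_i| ≤ κ for all i, x (with |β_i| ≤ 1). Then the plug-in classifier ĥ(x) ∈ argmax_i Ŵ_i(x) η̂_i(x) satisfies max_h E[h] − E[ĥ] ≤ (1 + κ)·E_x[‖η(x) − η̂(x)‖_1] + 2κ. -/

import Mathlib

/-!
Write `e` for the indicator of the plug-in choice `ĥ(x)` and `c = h(x)` for a competitor.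
Replacing `β` by `Ŵ` in `∑ βᵢ ηᵢ cᵢ` and in `∑ βᵢ ηᵢ eᵢ` costs at most `κ` each, because
`∑ ηᵢ = 1` and all entries of `c` and `e` lie in `[0, 1]`. What remains is
`∑ Ŵᵢ (ηᵢ - η̂ᵢ)(cᵢ - eᵢ) + ∑ Ŵᵢ η̂ᵢ (cᵢ - eᵢ)`: the first term is at most `(1 + κ) ‖η - η̂‖₁` by
Hölder, since `|Ŵᵢ| ≤ 1 + κ` and `|cᵢ - eᵢ| ≤ 1`, and the second is nonpositive because `ĥ`
maximizes `Ŵᵢ η̂ᵢ`. Integrating this pointwise bound over `x` gives the theorem.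
-/

open MeasureTheory Finset

section ProbabilityVector

variable {ι : Type*} [Fintype ι]

lemma le_one_of_sum_eq_one {c : ι → ℝ} (hc : ∀ i, 0 ≤ c i) (hcs : ∑ i, c i = 1) (i : ι) :
    c i ≤ 1 :=
  hcs ▸ single_le_sum (fun k _ => hc k) (mem_univ i)

lemma abs_sum_mul_mul_le {f d g : ι → ℝ} {C : ℝ} (hf : ∀ i, |f i| ≤ C) (hg : ∀ i, |g i| ≤ 1) :
    |∑ i, f i * d i * g i| ≤ C * ∑ i, |d i| := by
  rw [mul_sum]
  refine (abs_sum_le_sum_abs _ _).trans (sum_le_sum fun i _ => ?_)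
  calc |f i * d i * g i| = |f i| * |d i| * |g i| := by rw [abs_mul, abs_mul]
    _ ≤ |f i| * |d i| * 1 := by gcongr; exact hg i
    _ ≤ C * |d i| := by rw [mul_one]; gcongr; exact hf i

lemma sum_mul_le_of_forall_le {f c : ι → ℝ} (hc : ∀ i, 0 ≤ c i) (hcs : ∑ i, c i = 1) {j : ι}
    (hj : ∀ i, f i ≤ f j) : ∑ i, f i * c i ≤ f j :=
  calc ∑ i, f i * c i ≤ ∑ i, f j * c i := sum_le_sum fun i _ => by gcongr; exacts [hc i, hj i]
    _ = f j := by rw [← mul_sum, hcs, mul_one]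

theorem plugin_regret_le [DecidableEq ι] {a b w c β : ι → ℝ} {κ : ℝ}
    (ha : ∀ i, 0 ≤ a i) (has : ∑ i, a i = 1)
    (hc : ∀ i, 0 ≤ c i) (hcs : ∑ i, c i = 1)
    (hβ : ∀ i, |β i| ≤ 1) (hw : ∀ i, |w i - β i| ≤ κ)
    {j : ι} (hj : ∀ i, w i * b i ≤ w j * b j) :
    ∑ i, β i * a i * c i - ∑ i, β i * a i * (if i = j then (1:ℝ) else 0)
      ≤ (1 + κ) * ∑ i, |a i - b i| + 2 * κ := by
  set e : ι → ℝ := fun i => if i = j then 1 else 0 with he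
  have hc1 := le_one_of_sum_eq_one hc hcs
  have he0 : ∀ i, 0 ≤ e i := fun i => by simp only [he]; split_ifs <;> norm_num
  have he1 : ∀ i, e i ≤ 1 := fun i => by simp only [he]; split_ifs <;> norm_num
  have hβw : ∀ i, |β i - w i| ≤ κ := fun i => abs_sub_comm (w i) (β i) ▸ hw i
  have hw1 : ∀ i, |w i| ≤ 1 + κ := fun i => by
    linarith [abs_sub_abs_le_abs_sub (w i) (β i), hβ i, hw i]
  have ha1 : ∑ i, |a i| = 1 := by simp_rw [abs_of_nonneg (ha _)]; exact has
  have swap_c : |∑ i, (β i - w i) * a i * c i| ≤ κ := by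
    simpa [ha1] using abs_sum_mul_mul_le (d := a) hβw fun i => abs_le.2 ⟨by linarith [hc i], hc1 i⟩
  have swap_e : |∑ i, (β i - w i) * a i * e i| ≤ κ := by
    simpa [ha1] using abs_sum_mul_mul_le (d := a) hβw fun i => abs_le.2 ⟨by linarith [he0 i], he1 i⟩
  have holder : |∑ i, w i * (a i - b i) * (c i - e i)| ≤ (1 + κ) * ∑ i, |a i - b i| :=
    abs_sum_mul_mul_le hw1 fun i =>
      abs_le.2 ⟨by linarith [hc i, he1 i], by linarith [hc1 i, he0 i]⟩
  have plugin : ∑ i, w i * b i * c i ≤ ∑ i, w i * b i * e i := by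
    simpa [he, mul_ite] using sum_mul_le_of_forall_le hc hcs hj
  have split : ∑ i, β i * a i * c i - ∑ i, β i * a i * e i
      = ∑ i, (β i - w i) * a i * c i - ∑ i, (β i - w i) * a i * e i
        + ∑ i, w i * (a i - b i) * (c i - e i)
        + (∑ i, w i * b i * c i - ∑ i, w i * b i * e i) := by
    simp only [sub_mul, mul_sub, sum_sub_distrib]
    ring
  rw [split]
  linarith [le_abs_self (∑ i, (β i - w i) * a i * c i),
    neg_abs_le (∑ i, (β i - w i) * a i * e i),
    le_abs_self (∑ i, w i * (a i - b i) * (c i - e i))]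

end ProbabilityVector

theorem pi_ew_regret_bound_general
    {X : Type*} [MeasurableSpace X] {m : ℕ}
    (ν : Measure X) [IsProbabilityMeasure ν]
    (η ηhat : X → Fin m → ℝ)
    (hη : ∀ x i, 0 ≤ η x i) (hηs : ∀ x, ∑ i, η x i = 1)
    (β : Fin m → ℝ) (hβ1 : ∀ i, |β i| ≤ 1)
    (κ : ℝ)
    (What : X → Fin m → ℝ) (hWhat : ∀ x i, |What x i - β i| ≤ κ)
    (hhat : X → Fin m)
    (hargmax : ∀ x i, What x i * ηhat x i ≤ What x (hhat x) * ηhat x (hhat x))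
    (hintopt : Integrable (fun x => ∑ i, β i * η x i *
        (if i = hhat x then (1:ℝ) else 0)) ν)
    (hintgap : Integrable (fun x => ∑ i, |η x i - ηhat x i|) ν) :
    ∀ h : X → Fin m → ℝ,
      (∀ x i, 0 ≤ h x i) → (∀ x, ∑ i, h x i = 1) →
      Integrable (fun x => ∑ i, β i * η x i * h x i) ν →
      (∫ x, ∑ i, β i * η x i * h x i ∂ν)
          - (∫ x, ∑ i, β i * η x i * (if i = hhat x then (1:ℝ) else 0) ∂ν)
        ≤ (1 + κ) * (∫ x, ∑ i, |η x i - ηhat x i| ∂ν) + 2 * κ := by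
  intro h hh0 hhs hintf
  have hbound := (hintgap.const_mul (1 + κ)).add (integrable_const (2 * κ))
  calc (∫ x, ∑ i, β i * η x i * h x i ∂ν)
        - (∫ x, ∑ i, β i * η x i * (if i = hhat x then (1:ℝ) else 0) ∂ν)
      = ∫ x, (∑ i, β i * η x i * h x i
          - ∑ i, β i * η x i * (if i = hhat x then (1:ℝ) else 0)) ∂ν :=
        (integral_sub hintf hintopt).symm
    _ ≤ ∫ x, ((1 + κ) * ∑ i, |η x i - ηhat x i| + 2 * κ) ∂ν :=
        integral_mono (hintf.sub hintopt) hbound fun x =>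
          plugin_regret_le (hη x) (hηs x) (hh0 x) (hhs x) hβ1 (hWhat x) (hargmax x)
    _ = (1 + κ) * (∫ x, ∑ i, |η x i - ηhat x i| ∂ν) + 2 * κ := by
        rw [integral_add (hintgap.const_mul (1 + κ)) (integrable_const (2 * κ)),
          integral_const_mul, integral_const]
        simp

/-- Simplified PI-EW regret bound: the plug-in classifier built from approximate weights
`Ŵ` (with `|Ŵ_i(x) − β_i| ≤ κ`) and an estimate `η̂` of `η` has regret at most
`(1+κ)·E_x[‖η − η̂‖₁] + 2κ` for the linear metric with coefficients `β`. -/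
theorem pi_ew_regret_bound
    {X : Type*} [MeasurableSpace X] {m : ℕ}
    (ν : Measure X) [IsProbabilityMeasure ν]
    (η ηhat : X → Fin m → ℝ)
    (hη : ∀ x i, 0 ≤ η x i) (hηs : ∀ x, ∑ i, η x i = 1)
    (hηhat : ∀ x i, 0 ≤ ηhat x i) (hηhats : ∀ x, ∑ i, ηhat x i = 1)
    (β : Fin m → ℝ) (hβ0 : ∀ i, 0 ≤ β i) (hβ1 : ∀ i, |β i| ≤ 1)
    (hβ2 : Real.sqrt (∑ i, β i ^ 2) ≤ 1)
    (κ : ℝ) (hκ : 0 ≤ κ)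
    (What : X → Fin m → ℝ) (hWhat : ∀ x i, |What x i - β i| ≤ κ)
    (hhat : X → Fin m)
    (hargmax : ∀ x i, What x i * ηhat x i ≤ What x (hhat x) * ηhat x (hhat x))
    (hintopt : Integrable (fun x => ∑ i, β i * η x i *
        (if i = hhat x then (1:ℝ) else 0)) ν)
    (hintgap : Integrable (fun x => ∑ i, |η x i - ηhat x i|) ν) :
    ∀ h : X → Fin m → ℝ,
      (∀ x i, 0 ≤ h x i) → (∀ x, ∑ i, h x i = 1) →
      Integrable (fun x => ∑ i, β i * η x i * h x i) ν →
      (∫ x, ∑ i, β i * η x i * h x i ∂ν)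
          - (∫ x, ∑ i, β i * η x i * (if i = hhat x then (1:ℝ) else 0) ∂ν)
        ≤ (1 + κ) * (∫ x, ∑ i, |η x i - ηhat x i| ∂ν) + 2 * κ :=
  pi_ew_regret_bound_general ν η ηhat hη hηs β hβ1 κ What hWhat hhat hargmax hintopt hintgap
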